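/- Six-dimensional Hamiltonian reduction: let Θ be a smooth function of variables x₁, x₂, x₃, x₄ and times t₁, t₂, with Poisson bracket {F,H} = F_{x₄}H_{x₃} − F_{x₃}H_{x₄}. Then the pair of linear operators Lᵢ = ∂_{tᵢ} − z∂_{xᵢ} − {·, Θ_{xᵢ}} (i = 1,2) commute on smooth functions for all values of z if and only if the bracketing function Θ_{x₁t₂} − Θ_{x₂t₁} − {Θ_{x₁}, Θ_{x₂}} has vanishing Poisson bracket with every function, i.e. is annihilated by ∂_{x₃} and ∂_{x₄}; in particular the equation Θ_{xᵢtₖ} − Θ_{xₖtᵢ} − {Θ_{xᵢ}, Θ_{xₖ}} = 0 implies [Lᵢ, Lₖ] = 0. -/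

import Mathlib

/-- Partial derivative on ℝ⁶ (coordinates 0..3 = x₁..x₄ and 4,5 = t₁,t₂). -/
noncomputable def pd (i : Fin 6) (f : (Fin 6 → ℝ) → ℝ) : (Fin 6 → ℝ) → ℝ :=
  fun x => fderiv ℝ f x (Pi.single i 1)

/-- Poisson bracket in the phase variables x₃, x₄: {F,H} = F_{x₄}H_{x₃} − F_{x₃}H_{x₄}. -/
noncomputable def pb (f g : (Fin 6 → ℝ) → ℝ) : (Fin 6 → ℝ) → ℝ :=
  fun x => pd 3 f x * pd 2 g x - pd 2 f x * pd 3 g x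

/-- L₁ = ∂_{t₁} − z∂_{x₁} − {·, Θ_{x₁}}. -/
noncomputable def L1 (Θ : (Fin 6 → ℝ) → ℝ) (z : ℝ) (f : (Fin 6 → ℝ) → ℝ) :
    (Fin 6 → ℝ) → ℝ :=
  fun x => pd 4 f x - z * pd 0 f x - pb f (pd 0 Θ) x

/-- L₂ = ∂_{t₂} − z∂_{x₂} − {·, Θ_{x₂}}. -/
noncomputable def L2 (Θ : (Fin 6 → ℝ) → ℝ) (z : ℝ) (f : (Fin 6 → ℝ) → ℝ) :
    (Fin 6 → ℝ) → ℝ :=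
  fun x => pd 5 f x - z * pd 1 f x - pb f (pd 1 Θ) x

/-- The six-dimensional heavenly expression K(Θ) = Θ_{x₁t₂} − Θ_{x₂t₁} − {Θ_{x₁},Θ_{x₂}}. -/
noncomputable def K (Θ : (Fin 6 → ℝ) → ℝ) : (Fin 6 → ℝ) → ℝ :=
  fun x => pd 5 (pd 0 Θ) x - pd 4 (pd 1 Θ) x - pb (pd 0 Θ) (pd 1 Θ) x

lemma pd_smooth {f : (Fin 6 → ℝ) → ℝ} (hf : ContDiff ℝ (⊤ : ℕ∞) f) (i : Fin 6) :
    ContDiff ℝ (⊤ : ℕ∞) (pd i f) :=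
  (hf.fderiv_right (by simp)).clm_apply contDiff_const

lemma pd_diff {f : (Fin 6 → ℝ) → ℝ} (hf : ContDiff ℝ (⊤ : ℕ∞) f) (i : Fin 6) (x : Fin 6 → ℝ) :
    DifferentiableAt ℝ (pd i f) x :=
  ((pd_smooth hf i).differentiable (by simp)).differentiableAt

lemma pd_sub {f g : (Fin 6 → ℝ) → ℝ} {x} (hf : DifferentiableAt ℝ f x)
    (hg : DifferentiableAt ℝ g x) (i : Fin 6) :
    pd i (fun y => f y - g y) x = pd i f x - pd i g x := by
  simp [pd, fderiv_fun_sub hf hg]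

lemma pd_const_mul {f : (Fin 6 → ℝ) → ℝ} {x} (hf : DifferentiableAt ℝ f x)
    (c : ℝ) (i : Fin 6) :
    pd i (fun y => c * f y) x = c * pd i f x := by
  simp [pd, fderiv_const_mul hf c]

lemma pd_mul {f g : (Fin 6 → ℝ) → ℝ} {x} (hf : DifferentiableAt ℝ f x)
    (hg : DifferentiableAt ℝ g x) (i : Fin 6) :
    pd i (fun y => f y * g y) x = pd i f x * g x + f x * pd i g x := by
  simp [pd, fderiv_fun_mul hf hg]; ring

lemma pd_comm {f : (Fin 6 → ℝ) → ℝ} (hf : ContDiff ℝ (⊤ : ℕ∞) f) (i j : Fin 6) :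
    pd i (pd j f) = pd j (pd i f) := by
  funext x
  have hd : DifferentiableAt ℝ (fderiv ℝ f) x :=
    ((hf.fderiv_right (m := 1) (WithTop.coe_le_coe.mpr le_top)).differentiable (by simp)).differentiableAt
  have h1 : ∀ (u v : Fin 6 → ℝ),
      fderiv ℝ (fun y => fderiv ℝ f y u) x v = fderiv ℝ (fderiv ℝ f) x v u := by
    intro u v
    rw [fderiv_clm_apply hd (differentiableAt_const u)]
    simp
  have hsym : IsSymmSndFDerivAt ℝ f x := (hf.contDiffAt).isSymmSndFDerivAt
    (by rw [minSmoothness_of_isRCLikeNormedField]; exact WithTop.coe_le_coe.mpr (le_top : (2:ℕ∞) ≤ ⊤))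
  rw [show pd i (pd j f) x
        = fderiv ℝ (fun y => fderiv ℝ f y (Pi.single j 1)) x (Pi.single i 1) from rfl,
      show pd j (pd i f) x
        = fderiv ℝ (fun y => fderiv ℝ f y (Pi.single i 1)) x (Pi.single j 1) from rfl,
      h1, h1]
  exact hsym _ _

lemma pd_eval (i j : Fin 6) (x : Fin 6 → ℝ) :
    pd j (fun y => y i) x = (Pi.single j (1:ℝ) : Fin 6 → ℝ) i := by
  have h : fderiv ℝ (fun y : Fin 6 → ℝ => y i) x
      = (ContinuousLinearMap.proj i : (Fin 6 → ℝ) →L[ℝ] ℝ) :=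
    ((ContinuousLinearMap.proj (R := ℝ) (φ := fun _ : Fin 6 => ℝ) i).fderiv : _)
  simp [pd, h]

lemma pd_expand {f g : (Fin 6 → ℝ) → ℝ} (hf : ContDiff ℝ (⊤ : ℕ∞) f) (hg : ContDiff ℝ (⊤ : ℕ∞) g)
    (z : ℝ) (i p q : Fin 6) (x : Fin 6 → ℝ) :
    pd i (fun y => pd p f y - z * pd q f y - (pd 3 f y * pd 2 g y - pd 2 f y * pd 3 g y)) x
      = pd i (pd p f) x - z * pd i (pd q f) x
        - (pd i (pd 3 f) x * pd 2 g x + pd 3 f x * pd i (pd 2 g) x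
          - (pd i (pd 2 f) x * pd 3 g x + pd 2 f x * pd i (pd 3 g) x)) := by
  have d1 : DifferentiableAt ℝ (fun y => pd p f y - z * pd q f y) x :=
    (pd_diff hf p x).sub ((pd_diff hf q x).const_mul z)
  have d2 : DifferentiableAt ℝ
      (fun y => pd 3 f y * pd 2 g y - pd 2 f y * pd 3 g y) x :=
    ((pd_diff hf 3 x).mul (pd_diff hg 2 x)).sub ((pd_diff hf 2 x).mul (pd_diff hg 3 x))
  rw [pd_sub d1 d2, pd_sub (pd_diff hf p x) ((pd_diff hf q x).const_mul z),
      pd_const_mul (pd_diff hf q x),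
      pd_sub ((pd_diff hf 3 x).fun_mul (pd_diff hg 2 x)) ((pd_diff hf 2 x).fun_mul (pd_diff hg 3 x)),
      pd_mul (pd_diff hf 3 x) (pd_diff hg 2 x), pd_mul (pd_diff hf 2 x) (pd_diff hg 3 x)]

lemma pd_expandK {f g : (Fin 6 → ℝ) → ℝ} (hf : ContDiff ℝ (⊤ : ℕ∞) f) (hg : ContDiff ℝ (⊤ : ℕ∞) g)
    (i : Fin 6) (x : Fin 6 → ℝ) :
    pd i (fun y => pd 5 f y - pd 4 g y - (pd 3 f y * pd 2 g y - pd 2 f y * pd 3 g y)) x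
      = pd i (pd 5 f) x - pd i (pd 4 g) x
        - (pd i (pd 3 f) x * pd 2 g x + pd 3 f x * pd i (pd 2 g) x
          - (pd i (pd 2 f) x * pd 3 g x + pd 2 f x * pd i (pd 3 g) x)) := by
  have d1 : DifferentiableAt ℝ (fun y => pd 5 f y - pd 4 g y) x :=
    (pd_diff hf 5 x).sub (pd_diff hg 4 x)
  have d2 : DifferentiableAt ℝ
      (fun y => pd 3 f y * pd 2 g y - pd 2 f y * pd 3 g y) x :=
    ((pd_diff hf 3 x).mul (pd_diff hg 2 x)).sub ((pd_diff hf 2 x).mul (pd_diff hg 3 x))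
  rw [pd_sub d1 d2, pd_sub (pd_diff hf 5 x) (pd_diff hg 4 x),
      pd_sub ((pd_diff hf 3 x).fun_mul (pd_diff hg 2 x)) ((pd_diff hf 2 x).fun_mul (pd_diff hg 3 x)),
      pd_mul (pd_diff hf 3 x) (pd_diff hg 2 x), pd_mul (pd_diff hf 2 x) (pd_diff hg 3 x)]

lemma key (Θ ψ : (Fin 6 → ℝ) → ℝ) (hΘ : ContDiff ℝ (⊤ : ℕ∞) Θ) (hψ : ContDiff ℝ (⊤ : ℕ∞) ψ)
    (z : ℝ) (x : Fin 6 → ℝ) :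
    L1 Θ z (L2 Θ z ψ) x - L2 Θ z (L1 Θ z ψ) x
      = pd 3 ψ x * pd 2 (K Θ) x - pd 2 ψ x * pd 3 (K Θ) x := by
  have ha : ContDiff ℝ (⊤ : ℕ∞) (pd 0 Θ) := pd_smooth hΘ 0
  have hb : ContDiff ℝ (⊤ : ℕ∞) (pd 1 Θ) := pd_smooth hΘ 1
  have eL1 : L1 Θ z ψ = fun y => pd 4 ψ y - z * pd 0 ψ y
      - (pd 3 ψ y * pd 2 (pd 0 Θ) y - pd 2 ψ y * pd 3 (pd 0 Θ) y) := rfl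
  have eL2 : L2 Θ z ψ = fun y => pd 5 ψ y - z * pd 1 ψ y
      - (pd 3 ψ y * pd 2 (pd 1 Θ) y - pd 2 ψ y * pd 3 (pd 1 Θ) y) := rfl
  have eK : K Θ = fun y => pd 5 (pd 0 Θ) y - pd 4 (pd 1 Θ) y
      - (pd 3 (pd 0 Θ) y * pd 2 (pd 1 Θ) y - pd 2 (pd 0 Θ) y * pd 3 (pd 1 Θ) y) := rfl
  simp only [L1, L2, pb, K]
  rw [eL1, eL2, eK]
  rw [pd_expand hψ hb z 4 5 1 x, pd_expand hψ hb z 0 5 1 x,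
      pd_expand hψ hb z 3 5 1 x, pd_expand hψ hb z 2 5 1 x,
      pd_expand hψ ha z 5 4 0 x, pd_expand hψ ha z 1 4 0 x,
      pd_expand hψ ha z 3 4 0 x, pd_expand hψ ha z 2 4 0 x,
      pd_expandK ha hb 2 x, pd_expandK ha hb 3 x]
  simp only [pd_comm hψ, pd_comm hΘ, pd_comm (pd_smooth hΘ 0), pd_comm (pd_smooth hΘ 1),
    pd_comm (pd_smooth hΘ 2), pd_comm (pd_smooth hΘ 3), pd_comm (pd_smooth hΘ 4),
    pd_comm (pd_smooth hΘ 5)]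
  ring

/-- six-dimensional Hamiltonian reduction: the operators
Lᵢ = ∂_{tᵢ} − z∂_{xᵢ} − {·, Θ_{xᵢ}} commute on smooth functions for all z iff the
function K(Θ) = Θ_{x₁t₂} − Θ_{x₂t₁} − {Θ_{x₁},Θ_{x₂}} Poisson-commutes with every
function, i.e. is annihilated by ∂_{x₃} and ∂_{x₄}; in particular K(Θ) ≡ 0 implies
[L₁,L₂] = 0. -/
theorem stmt18 (Θ : (Fin 6 → ℝ) → ℝ) (hΘ : ContDiff ℝ (⊤ : ℕ∞) Θ) :
    ((∀ (z : ℝ) (ψ : (Fin 6 → ℝ) → ℝ), ContDiff ℝ (⊤ : ℕ∞) ψ →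
        ∀ x, L1 Θ z (L2 Θ z ψ) x - L2 Θ z (L1 Θ z ψ) x = 0)
      ↔ ∀ x, pd 2 (K Θ) x = 0 ∧ pd 3 (K Θ) x = 0)
    ∧ ((∀ x, K Θ x = 0) →
        ∀ (z : ℝ) (ψ : (Fin 6 → ℝ) → ℝ), ContDiff ℝ (⊤ : ℕ∞) ψ →
          ∀ x, L1 Θ z (L2 Θ z ψ) x - L2 Θ z (L1 Θ z ψ) x = 0) := by
  have hev : ∀ i : Fin 6, ContDiff ℝ (⊤ : ℕ∞) (fun y : Fin 6 → ℝ => y i) := fun i =>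
    (ContinuousLinearMap.proj (R := ℝ) (φ := fun _ : Fin 6 => ℝ) i).contDiff
  have main : (∀ (z : ℝ) (ψ : (Fin 6 → ℝ) → ℝ), ContDiff ℝ (⊤ : ℕ∞) ψ →
        ∀ x, L1 Θ z (L2 Θ z ψ) x - L2 Θ z (L1 Θ z ψ) x = 0)
      ↔ ∀ x, pd 2 (K Θ) x = 0 ∧ pd 3 (K Θ) x = 0 := by
    constructor
    · intro H x
      have h3 := H 0 (fun y => y 3) (hev 3) x
      have h2 := H 0 (fun y => y 2) (hev 2) x
      rw [key Θ _ hΘ (hev 3) 0 x] at h3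
      rw [key Θ _ hΘ (hev 2) 0 x] at h2
      have e33 : (Pi.single (3:Fin 6) (1:ℝ) : Fin 6 → ℝ) 3 = 1 := Pi.single_eq_same _ _
      have e23 : (Pi.single (2:Fin 6) (1:ℝ) : Fin 6 → ℝ) 3 = 0 :=
        Pi.single_eq_of_ne (by decide) _
      have e32 : (Pi.single (3:Fin 6) (1:ℝ) : Fin 6 → ℝ) 2 = 0 :=
        Pi.single_eq_of_ne (by decide) _
      have e22 : (Pi.single (2:Fin 6) (1:ℝ) : Fin 6 → ℝ) 2 = 1 := Pi.single_eq_same _ _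
      rw [pd_eval, pd_eval, e33, e23] at h3
      rw [pd_eval, pd_eval, e32, e22] at h2
      constructor <;> linarith
    · intro H z ψ hψ x
      rw [key Θ ψ hΘ hψ z x, (H x).1, (H x).2]
      ring
  refine ⟨main, fun h0 => ?_⟩
  have hKf : K Θ = fun _ => 0 := funext h0
  refine main.mpr fun x => ?_
  rw [hKf]
  constructor <;> simp [pd]
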